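/- arXiv:1312.2773 — 2 statements merged into one kernel-verified Lean document; each statement's English description precedes it below -/
import Mathlib

section
/- Let μ, ν, Γ, R ∈ ℝ with R > 0, and let C = C_r + iC_i ∈ ℂ. There exists φ ∈ ℝ such that A = R e^{iφ} satisfies 0 = (μ + iν)A + C|A|²A + Γ·conj(A) if and only if R satisfies the quartic equation (C_r² + C_i²)R⁴ + 2(μC_r + νC_i)R² + μ² + ν² − Γ² = 0. -/
/-!
Since `‖A‖ = R`, the equation for `A = R e^{iφ}` factors as
`R e^{-iφ} (a e^{2iφ} + Γ) = 0` with `a = μ + iν + C R²`, so for `R ≠ 0` it says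
`a e^{2iφ} = -Γ`. A phase solving this exists iff `|a| = |Γ|`, and `|a|² - Γ²` is the quartic.
-/

open Complex ComplexConjugate

theorem Complex.exists_mul_exp_eq_iff_norm_eq (z w : ℂ) :
    (∃ θ : ℝ, z * exp (θ * I) = w) ↔ ‖z‖ = ‖w‖ := by
  refine ⟨fun ⟨θ, h⟩ => by rw [← h, norm_mul, norm_exp_ofReal_mul_I, mul_one], fun h => ?_⟩
  rcases eq_or_ne z 0 with rfl | hz
  · exact ⟨0, by rw [zero_mul, eq_comm, ← norm_eq_zero, ← h, norm_zero]⟩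
  · have hnorm : ‖w / z‖ = 1 := by
      rw [norm_div, h, div_self (h ▸ norm_ne_zero_iff.mpr hz)]
    obtain ⟨θ, hθ⟩ := (norm_eq_one_iff (w / z)).mp hnorm
    exact ⟨θ, by rw [hθ, mul_div_cancel₀ _ hz]⟩

theorem Complex.mul_add_mul_conj_eq_zero_iff {R : ℝ} (hR : R ≠ 0) (a b : ℂ) (φ : ℝ) :
    a * (R * exp (φ * I)) + b * conj (R * exp (φ * I)) = 0 ↔
      a * exp ((2 * φ : ℝ) * I) = -b := by
  have hconj : conj ((R : ℂ) * exp (φ * I)) = R * exp (-φ * I) := by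
    rw [map_mul, ← exp_conj]; simp
  have hexp : exp (-φ * I) * exp ((2 * φ : ℝ) * I) = exp (φ * I) := by
    rw [← exp_add]; push_cast; ring_nf
  have hfactor : a * (R * exp (φ * I)) + b * conj (R * exp (φ * I)) =
      (R * exp (-φ * I)) * (a * exp ((2 * φ : ℝ) * I) + b) := by
    rw [hconj]; linear_combination (-(R : ℂ) * a) * hexp
  rw [hfactor, mul_eq_zero_iff_left (mul_ne_zero (by exact_mod_cast hR) (exp_ne_zero _)),
    add_eq_zero_iff_eq_neg]

open ComplexConjugate in
/-- Flat states of the FCGL equation: `A = R e^{iφ}` solves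
`0 = (μ+iν)A + C|A|²A + Γ·conj A` for some phase `φ` iff `R` satisfies the quartic
`(C_r²+C_i²)R⁴ + 2(μC_r+νC_i)R² + μ²+ν² − Γ² = 0`. -/
theorem flat_states_quartic (μ ν Γ R C_r C_i : ℝ) (hR : 0 < R) :
    (∃ φ : ℝ,
        (0 : ℂ) =
          ((μ : ℂ) + Complex.I * ν) * ((R : ℂ) * Complex.exp (Complex.I * φ)) +
            ((C_r : ℂ) + Complex.I * C_i) *
              (‖(R : ℂ) * Complex.exp (Complex.I * φ)‖ : ℂ) ^ 2 *
              ((R : ℂ) * Complex.exp (Complex.I * φ)) +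
            (Γ : ℂ) * conj ((R : ℂ) * Complex.exp (Complex.I * φ))) ↔
      (C_r ^ 2 + C_i ^ 2) * R ^ 4 + 2 * (μ * C_r + ν * C_i) * R ^ 2 +
          μ ^ 2 + ν ^ 2 - Γ ^ 2 = 0 := by
  set a : ℂ := (μ + C_r * R ^ 2 : ℝ) + (ν + C_i * R ^ 2 : ℝ) * I
  have hflat (φ : ℝ) : (0 : ℂ) =
      ((μ : ℂ) + I * ν) * ((R : ℂ) * exp (I * φ)) +
        ((C_r : ℂ) + I * C_i) * (‖(R : ℂ) * exp (I * φ)‖ : ℂ) ^ 2 * ((R : ℂ) * exp (I * φ)) +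
        (Γ : ℂ) * conj ((R : ℂ) * exp (I * φ)) ↔ a * exp ((2 * φ : ℝ) * I) = -Γ := by
    rw [← mul_add_mul_conj_eq_zero_iff hR.ne', mul_comm I (φ : ℂ), norm_mul,
      norm_exp_ofReal_mul_I, norm_real, Real.norm_of_nonneg hR.le, eq_comm]
    push_cast [a, mul_one]
    constructor <;> intro h <;> linear_combination h
  have hquartic : ‖a‖ = ‖(Γ : ℂ)‖ ↔ (C_r ^ 2 + C_i ^ 2) * R ^ 4 +
      2 * (μ * C_r + ν * C_i) * R ^ 2 + μ ^ 2 + ν ^ 2 - Γ ^ 2 = 0 := by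
    rw [← sq_eq_sq₀ (norm_nonneg _) (norm_nonneg _), Complex.sq_norm, Complex.sq_norm,
      normSq_add_mul_I, normSq_ofReal, ← sub_eq_zero]
    ring_nf
  calc _ ↔ ∃ φ : ℝ, a * exp ((2 * φ : ℝ) * I) = -Γ := exists_congr hflat
    _ ↔ ∃ θ : ℝ, a * exp (θ * I) = -Γ :=
      ⟨fun ⟨φ, h⟩ => ⟨_, h⟩, fun ⟨θ, h⟩ => ⟨θ / 2, by rwa [mul_div_cancel₀ θ two_ne_zero]⟩⟩
    _ ↔ ‖a‖ = ‖(Γ : ℂ)‖ := by rw [exists_mul_exp_eq_iff_norm_eq, norm_neg]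
    _ ↔ _ := hquartic
end

section
/- Let μ, ν, α, β, λ ∈ ℝ with μ ≠ 0 and (μ,ν) ≠ (0,0), let C = C_r + iC_i ∈ ℂ, let Γ₀ = √(μ² + ν²), and let φ₁ ∈ ℝ satisfy e^{−2iφ₁} = −(μ + iν)/Γ₀. Suppose B : ℝ × ℝ → ℝ and A₃ : ℝ × ℝ → ℂ are functions (with the indicated partial derivatives of B existing) satisfying at every (X,T): B_T e^{iφ₁} = (μ + iν)A₃ + (α + iβ)B_XX e^{iφ₁} + C B³ e^{iφ₁} + λ B e^{−iφ₁} + Γ₀·conj(A₃). Then B satisfies the Allen–Cahn equation B_T = (−λΓ₀/μ)B + ((αμ + βν)/μ)B_XX + ((μC_r + νC_i)/μ)B³ at every (X,T). -/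
/-!
Write `e = exp(iφ₁)` and `Γ₀ = √(μ² + ν²)`. The condition on `φ₁` says `μ + iν = -Γ₀ ē²`,
so `e ((μ + iν) A₃ + Γ₀ Ā₃) = Γ₀ (w - w̄)` with `w = e Ā₃` is purely imaginary. Multiplying
the third-order equation by `e` and taking real parts therefore eliminates `A₃` (the
solvability condition); inserting `e² = -(μ - iν)/Γ₀` turns what is left into
`μ B_T = (αμ + βν) B_XX + (μC_r + νC_i) B³ - λΓ₀ B`.
-/

open ComplexConjugate in
theorem Complex.re_mul_sq_eq_of_eq_mul_add_mul_conj {e z A P : ℂ} {s l : ℝ}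
    (he : conj e * e = 1) (hz : z = -s * conj e ^ 2)
    (hA : P * e - l * conj e = z * A + s * conj A) : (P * e ^ 2).re = l := by
  have hPe : P * e ^ 2 - l = s * (e * conj A - conj (e * conj A)) := by
    rw [map_mul, Complex.conj_conj]
    linear_combination e * hA + (l - s * conj e * A) * he + e * A * hz
  simpa [Complex.sub_conj, sub_eq_zero] using congrArg Complex.re hPe

open ComplexConjugate in
theorem FCGL_to_AllenCahn_general (μ ν α β lam C_r C_i : ℝ) (hμ : μ ≠ 0)
    (φ₁ : ℝ)
    (hφ : Complex.exp (-2 * Complex.I * φ₁) =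
      -(((μ : ℂ) + Complex.I * ν) / (Real.sqrt (μ ^ 2 + ν ^ 2) : ℂ)))
    (B : ℝ → ℝ → ℝ) (A₃ : ℝ → ℝ → ℂ)
    (h : ∀ X T : ℝ,
      ((deriv (fun T' => B X T') T : ℝ) : ℂ) * Complex.exp (Complex.I * φ₁) =
        ((μ : ℂ) + Complex.I * ν) * A₃ X T +
          ((α : ℂ) + Complex.I * β) *
            ((deriv (fun X' => deriv (fun X'' => B X'' T) X') X : ℝ) : ℂ) *
            Complex.exp (Complex.I * φ₁) +
          ((C_r : ℂ) + Complex.I * C_i) * ((B X T : ℝ) : ℂ) ^ 3 *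
            Complex.exp (Complex.I * φ₁) +
          (lam : ℂ) * ((B X T : ℝ) : ℂ) * Complex.exp (-Complex.I * φ₁) +
          (Real.sqrt (μ ^ 2 + ν ^ 2) : ℂ) * conj (A₃ X T)) :
    ∀ X T : ℝ,
      deriv (fun T' => B X T') T =
        (-lam * Real.sqrt (μ ^ 2 + ν ^ 2) / μ) * B X T +
          ((α * μ + β * ν) / μ) * deriv (fun X' => deriv (fun X'' => B X'' T) X') X +
          ((μ * C_r + ν * C_i) / μ) * (B X T) ^ 3 := by
  intro X T
  have hXT := h X T
  set s := Real.sqrt (μ ^ 2 + ν ^ 2)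
  set e := Complex.exp (Complex.I * φ₁)
  set t := deriv (fun T' => B X T') T
  set d := deriv (fun X' => deriv (fun X'' => B X'' T) X') X
  set b := B X T
  have hs : s ≠ 0 := (Real.sqrt_pos.2 (by positivity)).ne'
  have hsC : (s : ℂ) ≠ 0 := by exact_mod_cast hs
  have hconj_e : conj e = Complex.exp (-Complex.I * φ₁) := by
    rw [← Complex.exp_conj]; simp
  have he : conj e * e = 1 := by
    rw [hconj_e, ← Complex.exp_add]; simp
  have hconj_sq : conj e ^ 2 = -(((μ : ℂ) + Complex.I * ν) / s) := by
    rw [← hφ, hconj_e, ← Complex.exp_nat_mul]; ring_nf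
  have he_sq : e ^ 2 = -(((μ : ℂ) - Complex.I * ν) / s) := by
    simpa [sub_eq_add_neg] using congrArg conj hconj_sq
  have hsolv := Complex.re_mul_sq_eq_of_eq_mul_add_mul_conj
    (z := μ + Complex.I * ν) (A := A₃ X T) (s := s)
    (P := t - (α + Complex.I * β) * d - (C_r + Complex.I * C_i) * b ^ 3) (l := lam * b) he
    (by rw [hconj_sq]; field_simp) (by push_cast; rw [hconj_e]; linear_combination hXT)
  rw [he_sq] at hsolv
  simp only [← Complex.ofReal_pow, mul_neg, Complex.neg_re, Complex.mul_re, Complex.sub_re,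
    Complex.ofReal_re, Complex.add_re, Complex.I_re, zero_mul, Complex.I_im, Complex.ofReal_im,
    mul_zero, sub_self, add_zero, Complex.add_im, Complex.mul_im, one_mul, zero_add, sub_zero,
    Complex.div_ofReal_re, Complex.sub_im, zero_sub, Complex.div_ofReal_im, neg_sub] at hsolv
  field_simp at hsolv ⊢
  linear_combination -hsolv

open ComplexConjugate in
/-- Reduction of the FCGL to the Allen–Cahn equation near onset: if `B` (real) and `A₃`
(complex) satisfy the third-order solvability equation, then `B` satisfies
`B_T = (−λΓ₀/μ)B + ((αμ+βν)/μ)B_XX + ((μC_r+νC_i)/μ)B³`. -/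
theorem FCGL_to_AllenCahn (μ ν α β lam C_r C_i : ℝ) (hμ : μ ≠ 0)
    (hμν : ¬(μ = 0 ∧ ν = 0)) (φ₁ : ℝ)
    (hφ : Complex.exp (-2 * Complex.I * φ₁) =
      -(((μ : ℂ) + Complex.I * ν) / (Real.sqrt (μ ^ 2 + ν ^ 2) : ℂ)))
    (B : ℝ → ℝ → ℝ) (A₃ : ℝ → ℝ → ℂ)
    (h : ∀ X T : ℝ,
      ((deriv (fun T' => B X T') T : ℝ) : ℂ) * Complex.exp (Complex.I * φ₁) =
        ((μ : ℂ) + Complex.I * ν) * A₃ X T +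
          ((α : ℂ) + Complex.I * β) *
            ((deriv (fun X' => deriv (fun X'' => B X'' T) X') X : ℝ) : ℂ) *
            Complex.exp (Complex.I * φ₁) +
          ((C_r : ℂ) + Complex.I * C_i) * ((B X T : ℝ) : ℂ) ^ 3 *
            Complex.exp (Complex.I * φ₁) +
          (lam : ℂ) * ((B X T : ℝ) : ℂ) * Complex.exp (-Complex.I * φ₁) +
          (Real.sqrt (μ ^ 2 + ν ^ 2) : ℂ) * conj (A₃ X T)) :
    ∀ X T : ℝ,
      deriv (fun T' => B X T') T =
        (-lam * Real.sqrt (μ ^ 2 + ν ^ 2) / μ) * B X T +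
          ((α * μ + β * ν) / μ) * deriv (fun X' => deriv (fun X'' => B X'' T) X') X +
          ((μ * C_r + ν * C_i) / μ) * (B X T) ^ 3 :=
  FCGL_to_AllenCahn_general μ ν α β lam C_r C_i hμ φ₁ hφ B A₃ h
end
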